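/- The function h₂(α) := 1/2 + (α+1)/12 − (α+1)(α+2)(α+3)/720 − 1/α + h₁(α), where h₁(α) := ((α−3)(α−4)/(12α)) · 2^{−α} − α/24, is strictly increasing on the interval [1,2], and the equation h₂(α) = 0 has a unique solution α₂ in [1,2]; moreover α₂ lies in the open interval (1.50, 1.51). -/
import Mathlib

/-- `h₁(α) = ((α-3)(α-4)/(12α)) 2^{-α} - α/24`. -/
noncomputable def h₁ (α : ℝ) : ℝ := ((α - 3)*(α - 4)/(12*α)) * (2 : ℝ) ^ (-α) - α/24

/-- `h₂(α) = 1/2 + (α+1)/12 - (α+1)(α+2)(α+3)/720 - 1/α + h₁(α)`. -/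
noncomputable def h₂ (α : ℝ) : ℝ :=
  1/2 + (α + 1)/12 - (α + 1)*(α + 2)*(α + 3)/720 - 1/α + h₁ α

/-- exp-form of `h₂`. -/
noncomputable def φ₂ (x : ℝ) : ℝ :=
  1/2 + (x + 1)/12 - (x + 1)*(x + 2)*(x + 3)/720 - 1/x
    + (x - 3)*(x - 4)/(12*x) * Real.exp (Real.log 2 * (-x)) - x/24

lemma h₂_eq_φ₂ (x : ℝ) (hx : 0 < x) : h₂ x = φ₂ x := by
  unfold h₂ h₁ φ₂
  rw [Real.rpow_def_of_pos (by norm_num : (0:ℝ) < 2)]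
  ring

/-- derivative of `φ₂`. -/
noncomputable def D₂ (x : ℝ) : ℝ :=
  (19 - 12*x - 3*x^2)/720 + 1/x^2
    - Real.exp (Real.log 2 * (-x)) *
      (((12 - x^2) + Real.log 2 * (x * ((x - 3)*(x - 4))))/(12*x^2))

lemma hasDerivAt_φ₂ (x : ℝ) (hx : x ≠ 0) : HasDerivAt φ₂ (D₂ x) x := by
  have hid : HasDerivAt (fun t : ℝ => t) 1 x := hasDerivAt_id x
  have h3 : HasDerivAt (fun t : ℝ => t - 3) 1 x := hid.sub_const 3
  have h4 : HasDerivAt (fun t : ℝ => t - 4) 1 x := hid.sub_const 4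
  have hn : HasDerivAt (fun t : ℝ => (t - 3)*(t - 4)) (1*(x - 4) + (x - 3)*1) x := h3.mul h4
  have hd : HasDerivAt (fun t : ℝ => 12*t) 12 x := by simpa using hid.const_mul (12:ℝ)
  have hq : HasDerivAt (fun t : ℝ => (t - 3)*(t - 4)/(12*t))
      (((1*(x - 4) + (x - 3)*1) * (12*x) - (x - 3)*(x - 4)*12)/(12*x)^2) x :=
    hn.div hd (by simpa using hx)
  have hlin : HasDerivAt (fun t : ℝ => Real.log 2 * (-t)) (Real.log 2 * (-1)) x := by
    simpa using (hid.neg.const_mul (Real.log 2))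
  have hexp : HasDerivAt (fun t : ℝ => Real.exp (Real.log 2 * (-t)))
      (Real.exp (Real.log 2 * (-x)) * (Real.log 2 * (-1))) x := hlin.exp
  have hprod := hq.mul hexp
  have h12 : HasDerivAt (fun t : ℝ => (t + 1)/12) (1/12) x := by
    simpa using (hid.add_const 1).div_const 12
  have hcub : HasDerivAt (fun t : ℝ => (t + 1)*(t + 2)*(t + 3)/720)
      (((1*(x + 2) + (x + 1)*1)*(x + 3) + (x + 1)*(x + 2)*1)/720) x :=
    (((hid.add_const 1).mul (hid.add_const 2)).mul (hid.add_const 3)).div_const 720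
  have hinv : HasDerivAt (fun t : ℝ => 1/t) (-(x^2)⁻¹) x := by
    simpa [one_div] using hasDerivAt_inv hx
  have h24 : HasDerivAt (fun t : ℝ => t/24) (1/24) x := hid.div_const 24
  have total := ((((h12.const_add (1/2)).sub hcub).sub hinv).add hprod).sub h24
  have hD : D₂ x = 1/12 - ((1*(x + 2) + (x + 1)*1)*(x + 3) + (x + 1)*(x + 2)*1)/720
      - (-(x^2)⁻¹)
      + ((((1*(x - 4) + (x - 3)*1) * (12*x) - (x - 3)*(x - 4)*12)/(12*x)^2)
          * Real.exp (Real.log 2 * (-x))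
        + (x - 3)*(x - 4)/(12*x) * (Real.exp (Real.log 2 * (-x)) * (Real.log 2 * (-1))))
      - 1/24 := by
    unfold D₂
    field_simp
    ring
  rw [hD]
  exact total

lemma D₂_pos (x : ℝ) (hx1 : 1 < x) (hx2 : x < 2) : 0 < D₂ x := by
  have hx0 : (0:ℝ) < x := by linarith
  set l := Real.log 2 with hl
  have hl1 : 0.6931471803 < l := Real.log_two_gt_d9
  have hl2 : l < 0.6931471808 := Real.log_two_lt_d9
  set E := Real.exp (l * (-x)) with hE
  have hE0 : 0 < E := Real.exp_pos _
  have hEkey : E * (1 + l * x) ≤ 1 := by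
    have h1 : l * x + 1 ≤ Real.exp (l * x) := Real.add_one_le_exp _
    have h2 : E * Real.exp (l * x) = 1 := by
      rw [hE, ← Real.exp_add]; simp
    nlinarith [Real.exp_pos (l * x)]
  have h1lx : (0:ℝ) < 1 + l * x := by nlinarith
  have hEle : E ≤ 1 / (1 + l * x) := by
    rw [le_div_iff₀ h1lx]; exact hEkey
  have hN0 : (0:ℝ) < (12 - x^2) + l * (x * ((x - 3)*(x - 4))) := by nlinarith
  have hterm : E * (((12 - x^2) + l * (x * ((x - 3)*(x - 4))))/(12*x^2))
      ≤ (1/(1 + l*x)) * (((12 - x^2) + l * (x * ((x - 3)*(x - 4))))/(12*x^2)) := by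
    apply mul_le_mul_of_nonneg_right hEle
    positivity
  have hl0 : (0:ℝ) < l := by linarith
  have ha : (0:ℝ) < 79 - 12*x - 3*x^2 := by nlinarith
  have hb : (0:ℝ) < 420 - 41*x - 12*x^2 - 3*x^3 := by nlinarith
  have hmain : 0 < (x^2*(19 - 12*x - 3*x^2) + 720) * (1 + l*x)
      - 60 * ((12 - x^2) + l * (x * ((x - 3)*(x - 4)))) := by
    nlinarith [mul_pos (mul_pos hx0 hx0) ha, mul_pos hl0 (mul_pos (mul_pos hx0 hx0) hb)]
  have heq : (19 - 12*x - 3*x^2)/720 + 1/x^2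
      - (1/(1 + l*x)) * (((12 - x^2) + l * (x * ((x - 3)*(x - 4))))/(12*x^2))
      = ((x^2*(19 - 12*x - 3*x^2) + 720) * (1 + l*x)
        - 60 * ((12 - x^2) + l * (x * ((x - 3)*(x - 4))))) / (720 * x^2 * (1 + l*x)) := by
    field_simp
    ring
  have hge : (19 - 12*x - 3*x^2)/720 + 1/x^2
      - (1/(1 + l*x)) * (((12 - x^2) + l * (x * ((x - 3)*(x - 4))))/(12*x^2)) ≤ D₂ x := by
    unfold D₂
    rw [← hl, ← hE]
    linarith [hterm]
  have : 0 < (19 - 12*x - 3*x^2)/720 + 1/x^2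
      - (1/(1 + l*x)) * (((12 - x^2) + l * (x * ((x - 3)*(x - 4))))/(12*x^2)) := by
    rw [heq]
    positivity
  linarith


/-- `h₂` is strictly increasing on `[1,2]` and has a unique zero `α₂` there;
moreover `α₂ ∈ (1.50, 1.51)`. -/
theorem h₂_zero : StrictMonoOn h₂ (Set.Icc 1 2) ∧
    ∃ x ∈ Set.Icc (1:ℝ) 2, h₂ x = 0 ∧ x ∈ Set.Ioo (1.50:ℝ) 1.51 ∧
      ∀ y ∈ Set.Icc (1:ℝ) 2, h₂ y = 0 → y = x := by
  have hEq : ∀ x ∈ Set.Icc (1:ℝ) 2, h₂ x = φ₂ x := fun x hx => h₂_eq_φ₂ x (by linarith [hx.1])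
  have hcontφ : ContinuousOn φ₂ (Set.Icc 1 2) := fun x hx =>
    (hasDerivAt_φ₂ x (by have := hx.1; intro h; rw [h] at this; linarith)).continuousAt.continuousWithinAt
  have hmonoφ : StrictMonoOn φ₂ (Set.Icc 1 2) := by
    apply strictMonoOn_of_deriv_pos (convex_Icc 1 2) hcontφ
    intro x hx
    rw [interior_Icc] at hx
    rw [(hasDerivAt_φ₂ x (by have := hx.1; intro h; rw [h] at this; linarith)).deriv]
    exact D₂_pos x hx.1 hx.2
  have hmono : StrictMonoOn h₂ (Set.Icc 1 2) := by
    intro a ha b hb hab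
    rw [hEq a ha, hEq b hb]
    exact hmonoφ ha hb hab
  have hcont : ContinuousOn h₂ (Set.Icc 1 2) := hcontφ.congr hEq
  -- value at 3/2 is negative
  have h15 : h₂ (3/2) < 0 := by
    rw [h₂_eq_φ₂ _ (by norm_num)]
    unfold φ₂
    set E := Real.exp (Real.log 2 * (-(3/2:ℝ))) with hEdef
    have hE0 : 0 < E := Real.exp_pos _
    have key : E * E * (Real.exp (Real.log 2) * Real.exp (Real.log 2) * Real.exp (Real.log 2)) = 1 := by
      rw [hEdef, ← Real.exp_add, ← Real.exp_add, ← Real.exp_add, ← Real.exp_add,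
        show Real.log 2 * (-(3/2:ℝ)) + Real.log 2 * (-(3/2:ℝ)) + (Real.log 2 + Real.log 2 + Real.log 2) = 0 by ring,
        Real.exp_zero]
    rw [Real.exp_log (by norm_num : (0:ℝ) < 2)] at key
    have hEub : E < 0.3536 := by nlinarith [sq_nonneg (E - 0.3536)]
    nlinarith
  -- value at 151/100 is positive
  have h151 : 0 < h₂ (151/100) := by
    rw [h₂_eq_φ₂ _ (by norm_num)]
    unfold φ₂
    set E := Real.exp (Real.log 2 * (-(151/100:ℝ))) with hEdef
    have hE0 : 0 < E := Real.exp_pos _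
    have key : E^100 * (Real.exp (Real.log 2))^151 = 1 := by
      rw [hEdef, ← Real.exp_nat_mul, ← Real.exp_nat_mul, ← Real.exp_add]
      rw [show ((100:ℕ):ℝ) * (Real.log 2 * (-(151/100:ℝ))) + ((151:ℕ):ℝ) * Real.log 2 = 0 by push_cast; ring]
      exact Real.exp_zero
    rw [Real.exp_log (by norm_num : (0:ℝ) < 2)] at key
    have hElb : (0.351:ℝ) ≤ E := by
      by_contra h
      push_neg at h
      have h1 : E^100 ≤ (0.351:ℝ)^100 := pow_le_pow_left₀ hE0.le h.le 100
      have h2 : (0.351:ℝ)^100 * 2^151 < 1 := by norm_num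
      have h3 : (0:ℝ) < (2:ℝ)^151 := by positivity
      nlinarith
    nlinarith
  -- intermediate value
  have hsub : Set.Icc (3/2:ℝ) (151/100) ⊆ Set.Icc 1 2 :=
    Set.Icc_subset_Icc (by norm_num) (by norm_num)
  obtain ⟨x, hxmem, hx0⟩ := intermediate_value_Icc (by norm_num : (3/2:ℝ) ≤ 151/100)
    (hcont.mono hsub) ⟨h15.le, h151.le⟩
  refine ⟨hmono, x, hsub hxmem, hx0, ⟨?_, ?_⟩, ?_⟩
  · show (1.50:ℝ) < x
    rcases eq_or_lt_of_le hxmem.1 with he | hlt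
    · exfalso; rw [← he] at hx0; exact (ne_of_lt h15) hx0
    · norm_num; linarith
  · show x < (1.51:ℝ)
    rcases eq_or_lt_of_le hxmem.2 with he | hlt
    · exfalso; rw [he] at hx0; exact (ne_of_gt h151) hx0
    · norm_num; linarith
  · intro y hy hy0
    exact hmono.injOn hy (hsub hxmem) (by rw [hy0, hx0])
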